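/- Let ω_{SC} be a density operator on a bipartite finite-dimensional system with ω_S of full rank, and let Π_{S^n} be any orthogonal projector on S^n satisfying Π_{S^n} ≤ 2^{−n[H(S)_ω−δ]/2}(ω_S^{⊗n})^{−1/2}. Then Tr{Π_{S^n} ω_{SC}^{⊗n} Π_{S^n} ω_{SC}^{⊗n}} ≤ 2^{−n[H(S)_ω−δ]} Tr{ω_{SC}^{⊗n}(ω_S^{⊗n})^{−1/2} ω_{SC}^{⊗n}(ω_S^{⊗n})^{−1/2}} = 2^{−n[H(S)_ω−δ]} 2^{−n H₂(C|S)_ω}, where H₂(C|S)_ω = −log₂ Tr{ω_{SC} ω_S^{−1/2} ω_{SC} ω_S^{−1/2}} is the collision conditional entropy. -/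

import Mathlib

open Matrix BigOperators Kronecker
open scoped Classical ComplexOrder

variable {d : Type*} [Fintype d] [DecidableEq d]

/-- Trace norm of a matrix. -/
noncomputable def traceNorm (A : Matrix d d ℂ) : ℝ :=
  (((Matrix.posSemidef_conjTranspose_mul_self A).1.eigenvectorUnitary : Matrix d d ℂ) *
      Matrix.diagonal (fun i => ((Real.sqrt
        ((Matrix.posSemidef_conjTranspose_mul_self A).1.eigenvalues i) : ℝ) : ℂ)) *
      star ((Matrix.posSemidef_conjTranspose_mul_self A).1.eigenvectorUnitary :
        Matrix d d ℂ)).trace.re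

/-- Spectral functional calculus for a Hermitian matrix. -/
noncomputable def specFun {A : Matrix d d ℂ} (hA : A.IsHermitian) (f : ℝ → ℝ) :
    Matrix d d ℂ :=
  (hA.eigenvectorUnitary : Matrix d d ℂ) *
    Matrix.diagonal (fun i => (f (hA.eigenvalues i) : ℂ)) *
    star (hA.eigenvectorUnitary : Matrix d d ℂ)

/-- Matrix power via functional calculus, with the convention `0 ^ s = 0` on kernels.
For `s = -1/2` this gives the square root of the Moore–Penrose inverse. -/
noncomputable def mpow (A : Matrix d d ℂ) (s : ℝ) : Matrix d d ℂ :=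
  if hA : A.PosSemidef then
    specFun hA.1 (fun t => if t = 0 then 0 else t ^ s)
  else 0

/-- Base-2 matrix logarithm via functional calculus, `log 0 := 0` on kernels. -/
noncomputable def mlog (A : Matrix d d ℂ) : Matrix d d ℂ :=
  if hA : A.PosSemidef then
    specFun hA.1 (fun t => if t = 0 then 0 else Real.logb 2 t)
  else 0

/-- Positive spectral projection `{X ≥ 0}` of a Hermitian matrix. -/
noncomputable def posProj {A : Matrix d d ℂ} (hA : A.IsHermitian) : Matrix d d ℂ :=
  specFun hA (fun t => if 0 ≤ t then 1 else 0)

/-- A density operator: positive semi-definite with unit trace. -/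
def IsDensity (ρ : Matrix d d ℂ) : Prop := ρ.PosSemidef ∧ ρ.trace = 1

/-- A measurement operator: `0 ≤ Λ ≤ I`. -/
def IsMeasOp (Λ : Matrix d d ℂ) : Prop := Λ.PosSemidef ∧ (1 - Λ).PosSemidef

/-- `n`-fold tensor power of a matrix. -/
def tpow (ρ : Matrix d d ℂ) (n : ℕ) : Matrix (Fin n → d) (Fin n → d) ℂ :=
  Matrix.of fun x y => ∏ i, ρ (x i) (y i)

/-- Partial trace over the right (second) tensor factor. -/
noncomputable def ptraceR {a b : Type*} [Fintype a] [Fintype b]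
    (ρ : Matrix (a × b) (a × b) ℂ) : Matrix a a ℂ :=
  Matrix.of fun i j => ∑ k, ρ (i, k) (j, k)

/-- Partial trace over the left (first) tensor factor. -/
noncomputable def ptraceL {a b : Type*} [Fintype a] [Fintype b]
    (ρ : Matrix (a × b) (a × b) ℂ) : Matrix b b ℂ :=
  Matrix.of fun i j => ∑ k, ρ (k, i) (k, j)

/-- Quantum relative entropy (base 2), via the `mlog` convention. -/
noncomputable def qRelEnt (ρ σ : Matrix d d ℂ) : ℝ :=
  ((ρ * (mlog ρ - mlog σ)).trace).re

/-- ε-hypothesis testing relative entropy. -/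
noncomputable def DH (ε : ℝ) (ρ σ : Matrix d d ℂ) : ℝ :=
  -Real.logb 2 (sInf {x : ℝ | ∃ Λ : Matrix d d ℂ,
    IsMeasOp Λ ∧ 1 - ε ≤ ((Λ * ρ).trace).re ∧ x = ((Λ * σ).trace).re})

/-- Petz–Rényi relative entropy of order α. -/
noncomputable def DAlpha (α : ℝ) (ρ σ : Matrix d d ℂ) : ℝ :=
  (1 / (α - 1)) * Real.logb 2 (((mpow ρ α * mpow σ (1 - α)).trace).re)

/-- Shannon entropy (bits) of a probability vector. -/
noncomputable def shannon (p : d → ℝ) : ℝ := -∑ x, p x * Real.logb 2 (p x)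

/-- von Neumann entropy (bits). -/
noncomputable def vnEntropy (A : Matrix d d ℂ) : ℝ :=
  if hA : A.IsHermitian then -∑ i, hA.eigenvalues i * Real.logb 2 (hA.eigenvalues i) else 0

/-- Collision (order-2) conditional entropy `H₂(C|S)` of a bipartite state on `s ⊗ c`. -/
noncomputable def H2cond {s c : Type*} [Fintype s] [Fintype c] [DecidableEq s] [DecidableEq c]
    (ω : Matrix (s × c) (s × c) ℂ) : ℝ :=
  -Real.logb 2 ((ω * (mpow (ptraceR ω) (-(1/2)) ⊗ₖ (1 : Matrix c c ℂ)) *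
      ω * (mpow (ptraceR ω) (-(1/2)) ⊗ₖ (1 : Matrix c c ℂ))).trace).re

/-- `n`-fold tensor power of a bipartite matrix, with indices regrouped as
`S^n × C^n`. -/
noncomputable def tpowBip {s c : Type*} [Fintype s] [Fintype c] [DecidableEq s] [DecidableEq c]
    (ω : Matrix (s × c) (s × c) ℂ) (n : ℕ) :
    Matrix ((Fin n → s) × (Fin n → c)) ((Fin n → s) × (Fin n → c)) ℂ :=
  Matrix.reindex (Equiv.arrowProdEquivProdArrow (Fin n) (fun _ => s) (fun _ => c))
    (Equiv.arrowProdEquivProdArrow (Fin n) (fun _ => s) (fun _ => c)) (tpow ω n)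

/-! Factor `ω^{⊗n} = Cᴴ C`; by cyclicity `Tr{Q ω^{⊗n} Q ω^{⊗n}} = Tr{X²}` with `X = C Q Cᴴ ≥ 0`,
and `Tr{X²}` is monotone on `0 ≤ X ≤ Y` because `Y² - X² = X (Y - X) + (Y - X) Y` has nonnegative
trace. Applied to `Q = Π ⊗ 1 ≤ 2^{-n[H(S)-δ]/2} (ω_S^{⊗n})^{-1/2} ⊗ 1` this gives the inequality.
For the equality, `(ω_S^{⊗n})^{-1/2} = (ω_S^{-1/2})^{⊗n}` since both are positive square roots of
`(ω_S^{⊗n})^{-1}`, so the trace is the `n`-th power of `Tr{ω ω_S^{-1/2} ω ω_S^{-1/2}}`, which is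
positive because `ω ≠ 0` and `ω_S^{-1/2} ⊗ 1` is positive definite. -/

open scoped MatrixOrder

section TensorPower

variable {ι : Type*}

lemma tpow_conjTranspose (M : Matrix ι ι ℂ) (n : ℕ) : tpow Mᴴ n = (tpow M n)ᴴ := by
  ext x y
  simp [tpow, conjTranspose_apply, star_prod]

lemma tpow_one [DecidableEq ι] (n : ℕ) : tpow (1 : Matrix ι ι ℂ) n = 1 := by
  ext x y
  by_cases h : x = y
  · simp [tpow, h, one_apply]
  · obtain ⟨i, hi⟩ := Function.ne_iff.mp h
    simpa [tpow, one_apply, h] using Finset.prod_eq_zero (Finset.mem_univ i) (by simp [hi])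

variable [Fintype ι]

lemma tpow_mul (M N : Matrix ι ι ℂ) (n : ℕ) : tpow (M * N) n = tpow M n * tpow N n := by
  ext x y
  simp only [tpow, of_apply, mul_apply, Fintype.prod_sum, Finset.prod_mul_distrib]

lemma trace_tpow (M : Matrix ι ι ℂ) (n : ℕ) : (tpow M n).trace = M.trace ^ n := by
  simp only [trace, diag, tpow, of_apply]
  rw [← Fin.prod_const, Fintype.prod_sum]

lemma Matrix.PosSemidef.tpow {M : Matrix ι ι ℂ} (hM : M.PosSemidef) (n : ℕ) :
    (_root_.tpow M n).PosSemidef := by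
  obtain ⟨B, rfl⟩ := CStarAlgebra.nonneg_iff_eq_star_mul_self.mp hM.nonneg
  rw [star_eq_conjTranspose, tpow_mul, tpow_conjTranspose]
  exact posSemidef_conjTranspose_mul_self _

lemma tpow_mul_tpow_inv [DecidableEq ι] {M : Matrix ι ι ℂ} (hM : IsUnit M) (n : ℕ) :
    tpow M n * tpow M⁻¹ n = 1 := by
  rw [← tpow_mul, mul_nonsing_inv _ ((isUnit_iff_isUnit_det M).mp hM), tpow_one]

lemma tpow_inv [DecidableEq ι] {M : Matrix ι ι ℂ} (hM : IsUnit M) (n : ℕ) :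
    tpow M⁻¹ n = (tpow M n)⁻¹ :=
  (inv_eq_right_inv (tpow_mul_tpow_inv hM n)).symm

lemma Matrix.PosDef.tpow [DecidableEq ι] {M : Matrix ι ι ℂ} (hM : M.PosDef) (n : ℕ) :
    (_root_.tpow M n).PosDef :=
  (hM.posSemidef.tpow n).posDef_iff_isUnit.mpr <|
    IsUnit.of_mul_eq_one _ (tpow_mul_tpow_inv hM.isUnit n)

end TensorPower

section BipartiteTensorPower

variable {s c : Type*} [Fintype s] [Fintype c] [DecidableEq s] [DecidableEq c]

lemma tpowBip_mul (M N : Matrix (s × c) (s × c) ℂ) (n : ℕ) :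
    tpowBip (M * N) n = tpowBip M n * tpowBip N n := by
  simp only [tpowBip, tpow_mul, reindex_apply, submatrix_mul_equiv]

lemma trace_tpowBip (M : Matrix (s × c) (s × c) ℂ) (n : ℕ) :
    (tpowBip M n).trace = M.trace ^ n := by
  rw [← trace_tpow]
  exact Equiv.sum_comp _ fun i => tpow M n i i

lemma tpowBip_kronecker (A : Matrix s s ℂ) (B : Matrix c c ℂ) (n : ℕ) :
    tpowBip (A ⊗ₖ B) n = tpow A n ⊗ₖ tpow B n := by
  ext ⟨x, y⟩ ⟨x', y'⟩
  simp [tpowBip, tpow, Equiv.arrowProdEquivProdArrow, kroneckerMap_apply, Finset.prod_mul_distrib]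

lemma Matrix.PosSemidef.tpowBip {M : Matrix (s × c) (s × c) ℂ} (hM : M.PosSemidef) (n : ℕ) :
    (_root_.tpowBip M n).PosSemidef :=
  (hM.tpow n).submatrix _

end BipartiteTensorPower

section TraceInequalities

variable {ι : Type*} [Fintype ι]

lemma Matrix.PosSemidef.trace_mul_nonneg {A B : Matrix ι ι ℂ} (hA : A.PosSemidef)
    (hB : B.PosSemidef) : 0 ≤ (A * B).trace := by
  obtain ⟨C, rfl⟩ := CStarAlgebra.nonneg_iff_eq_star_mul_self.mp hA.nonneg
  rw [star_eq_conjTranspose, Matrix.mul_assoc, trace_mul_comm]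
  exact (hB.mul_mul_conjTranspose_same C).trace_nonneg

lemma trace_mul_self_le_of_posSemidef_sub {X Y : Matrix ι ι ℂ} (hX : X.PosSemidef)
    (hXY : (Y - X).PosSemidef) : (X * X).trace ≤ (Y * Y).trace := by
  have hY : Y.PosSemidef := by simpa using hXY.add hX
  have hsq : Y * Y - X * X = X * (Y - X) + (Y - X) * Y := by noncomm_ring
  rw [← sub_nonneg, ← trace_sub, hsq, trace_add]
  exact add_nonneg (hX.trace_mul_nonneg hXY) (hXY.trace_mul_nonneg hY)

lemma trace_mul_conjTranspose_mul_mul_conjTranspose_mul (C Q : Matrix ι ι ℂ) :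
    (Q * (Cᴴ * C) * Q * (Cᴴ * C)).trace = (C * Q * Cᴴ * (C * Q * Cᴴ)).trace := by
  simp only [Matrix.mul_assoc]
  rw [trace_mul_comm C]
  simp only [Matrix.mul_assoc]

lemma trace_mul_mul_mul_le {Ω Q R : Matrix ι ι ℂ} (hΩ : Ω.PosSemidef) (hQ : Q.PosSemidef)
    (hQR : (R - Q).PosSemidef) : (Q * Ω * Q * Ω).trace ≤ (R * Ω * R * Ω).trace := by
  obtain ⟨C, rfl⟩ := CStarAlgebra.nonneg_iff_eq_star_mul_self.mp hΩ.nonneg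
  rw [star_eq_conjTranspose, trace_mul_conjTranspose_mul_mul_conjTranspose_mul,
    trace_mul_conjTranspose_mul_mul_conjTranspose_mul]
  refine trace_mul_self_le_of_posSemidef_sub (hQ.mul_mul_conjTranspose_same C) ?_
  simpa only [Matrix.mul_sub, Matrix.sub_mul] using hQR.mul_mul_conjTranspose_same C

lemma Matrix.IsHermitian.trace_mul_self_pos {X : Matrix ι ι ℂ} (hX : X.IsHermitian)
    (hX0 : X ≠ 0) : 0 < (X * X).trace := by
  nth_rewrite 1 [← hX.eq]
  exact (posSemidef_conjTranspose_mul_self X).trace_nonneg.lt_of_ne'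
    (mt trace_conjTranspose_mul_self_eq_zero_iff.mp hX0)

lemma trace_mul_mul_mul_pos [DecidableEq ι] {A B : Matrix ι ι ℂ} (hA : A.PosSemidef)
    (hA0 : A ≠ 0) (hB : B.PosDef) : 0 < (A * B * A * B).trace := by
  obtain ⟨C, rfl⟩ := CStarAlgebra.nonneg_iff_eq_star_mul_self.mp hA.nonneg
  obtain ⟨D, hD, rfl⟩ :=
    CStarAlgebra.isStrictlyPositive_iff_eq_star_mul_self.mp hB.isStrictlyPositive
  simp only [star_eq_conjTranspose] at hA0 ⊢
  have hX : D * (Cᴴ * C) * Dᴴ = (C * Dᴴ)ᴴ * (C * Dᴴ) := by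
    simp only [conjTranspose_mul, conjTranspose_conjTranspose, Matrix.mul_assoc]
  rw [trace_mul_conjTranspose_mul_mul_conjTranspose_mul, hX]
  refine (isHermitian_conjTranspose_mul_self _).trace_mul_self_pos fun h => hA0 ?_
  have hCD : C * Dᴴ = 0 := trace_conjTranspose_mul_self_eq_zero_iff.mp (by rw [h, trace_zero])
  rw [(hD.star.mul_left_eq_zero).mp hCD, Matrix.mul_zero]

end TraceInequalities

section MatrixPower

variable {ι : Type*} [Fintype ι] [DecidableEq ι]

lemma specFun_eq_cfc {A : Matrix ι ι ℂ} (hA : A.IsHermitian) (f : ℝ → ℝ) :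
    specFun hA f = cfc f A := by
  rw [hA.cfc_eq, IsHermitian.cfc, Unitary.conjStarAlgAut_apply]
  rfl

lemma mpow_eq_rpow {M : Matrix ι ι ℂ} (hM : M.PosDef) (s : ℝ) : mpow M s = M ^ s := by
  rw [mpow, dif_pos hM.posSemidef, specFun_eq_cfc, CFC.rpow_eq_cfc_real hM.posSemidef.nonneg]
  refine cfc_congr fun t ht => if_neg ?_
  exact (hM.isStrictlyPositive.spectrum_pos ht).ne'

lemma mpow_neg_half_mul_self {M : Matrix ι ι ℂ} (hM : M.PosDef) :
    mpow M (-(1/2)) * mpow M (-(1/2)) = M⁻¹ := by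
  rw [mpow_eq_rpow hM, ← CFC.rpow_add hM.isUnit, nonsing_inv_eq_ringInverse,
    CFC.inverse_eq_rpow_neg_one hM.isStrictlyPositive]
  norm_num

lemma Matrix.PosDef.mpow {M : Matrix ι ι ℂ} (hM : M.PosDef) (s : ℝ) : (mpow M s).PosDef := by
  rw [mpow_eq_rpow hM]
  exact (IsStrictlyPositive.rpow M s hM.isStrictlyPositive).posDef

lemma mpow_tpow_neg_half {M : Matrix ι ι ℂ} (hM : M.PosDef) (n : ℕ) :
    mpow (tpow M n) (-(1/2)) = tpow (mpow M (-(1/2))) n := by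
  have hMn := hM.tpow n
  refine (CFC.sq_eq_sq_iff _ _ (hMn.mpow _).posSemidef.nonneg
    ((hM.mpow _).posSemidef.tpow n).nonneg).mp ?_
  rw [sq, sq, mpow_neg_half_mul_self hMn, ← tpow_mul, mpow_neg_half_mul_self hM, tpow_inv hM.isUnit]

end MatrixPower

lemma sub_kronecker {α m n : Type*} [NonUnitalNonAssocRing α] (A B : Matrix m m α)
    (C : Matrix n n α) : (A - B) ⊗ₖ C = A ⊗ₖ C - B ⊗ₖ C := by
  ext ⟨i, k⟩ ⟨j, l⟩
  simp [sub_mul]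

lemma re_trace_mul_mul_mul_le_smul {ι : Type*} [Fintype ι] {Ω Q B : Matrix ι ι ℂ} {κ : ℝ}
    (hΩ : Ω.PosSemidef) (hQ : Q.PosSemidef) (hQB : ((κ : ℂ) • B - Q).PosSemidef) :
    (Q * Ω * Q * Ω).trace.re ≤ κ ^ 2 * (Ω * B * Ω * B).trace.re := by
  have hcyc : (B * Ω * B * Ω).trace = (Ω * B * Ω * B).trace := by
    rw [trace_mul_comm]
    simp only [Matrix.mul_assoc]
  have hsmul : (κ : ℂ) • B * Ω * ((κ : ℂ) • B) * Ω = ((κ ^ 2 : ℝ) : ℂ) • (B * Ω * B * Ω) := by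
    simp only [smul_mul_assoc, mul_smul_comm, smul_smul, sq, Complex.ofReal_mul]
  have hle := (Complex.le_def.mp (trace_mul_mul_mul_le hΩ hQ hQB)).1
  rwa [hsmul, trace_smul, hcyc, smul_eq_mul, Complex.re_ofReal_mul] at hle

lemma rpow_neg_mul_neg_logb {b x : ℝ} (hb : 0 < b) (hb1 : b ≠ 1) (hx : 0 < x) (n : ℕ) :
    b ^ (-(n : ℝ) * -Real.logb b x) = x ^ n := by
  rw [neg_mul_neg, mul_comm, Real.rpow_mul hb.le, Real.rpow_logb hb hb1 hx, Real.rpow_natCast]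

lemma re_trace_collision_tpowBip {s c : Type*} [Fintype s] [Fintype c] [DecidableEq s]
    [DecidableEq c] {ω : Matrix (s × c) (s × c) ℂ} (hω : ω.PosSemidef) (hω0 : ω ≠ 0)
    (hS : (ptraceR ω).PosDef) (n : ℕ) :
    ((tpowBip ω n *
        (mpow (tpow (ptraceR ω) n) (-(1/2)) ⊗ₖ (1 : Matrix (Fin n → c) (Fin n → c) ℂ)) *
        tpowBip ω n *
        (mpow (tpow (ptraceR ω) n) (-(1/2)) ⊗ₖ (1 : Matrix (Fin n → c) (Fin n → c) ℂ))).trace).re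
      = (2 : ℝ) ^ (-(n : ℝ) * H2cond ω) := by
  set K : Matrix (s × c) (s × c) ℂ := mpow (ptraceR ω) (-(1/2)) ⊗ₖ (1 : Matrix c c ℂ)
  have hK : mpow (tpow (ptraceR ω) n) (-(1/2)) ⊗ₖ (1 : Matrix (Fin n → c) (Fin n → c) ℂ) =
      tpowBip K n := by
    rw [tpowBip_kronecker, tpow_one, mpow_tpow_neg_half hS]
  obtain ⟨hre, him⟩ := Complex.pos_iff.mp <|
    trace_mul_mul_mul_pos hω hω0 ((hS.mpow (-(1/2))).kronecker PosDef.one)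
  have hreal : (ω * K * ω * K).trace = ((ω * K * ω * K).trace.re : ℂ) := Complex.ext rfl him.symm
  rw [hK, ← tpowBip_mul, ← tpowBip_mul, ← tpowBip_mul, trace_tpowBip, hreal,
    ← Complex.ofReal_pow, Complex.ofReal_re, H2cond,
    rpow_neg_mul_neg_logb (by norm_num) (by norm_num) hre]

theorem collision_trace_bound_general {s c : Type*} [Fintype s] [Fintype c] [DecidableEq s]
    [DecidableEq c] (ω : Matrix (s × c) (s × c) ℂ) (hω : IsDensity ω)
    (hS : (ptraceR ω).PosDef) (n : ℕ) (δ : ℝ)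
    (P : Matrix (Fin n → s) (Fin n → s) ℂ) (hP : P.IsHermitian) (hP2 : P * P = P)
    (hPle : ((((2 : ℝ) ^ (-(n : ℝ) * (vnEntropy (ptraceR ω) - δ) / 2) : ℝ) : ℂ) •
        mpow (tpow (ptraceR ω) n) (-(1/2)) - P).PosSemidef) :
    (((P ⊗ₖ (1 : Matrix (Fin n → c) (Fin n → c) ℂ)) * tpowBip ω n *
        (P ⊗ₖ (1 : Matrix (Fin n → c) (Fin n → c) ℂ)) * tpowBip ω n).trace).re ≤
      (2 : ℝ) ^ (-(n : ℝ) * (vnEntropy (ptraceR ω) - δ)) *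
        ((tpowBip ω n *
          (mpow (tpow (ptraceR ω) n) (-(1/2)) ⊗ₖ (1 : Matrix (Fin n → c) (Fin n → c) ℂ)) *
          tpowBip ω n *
          (mpow (tpow (ptraceR ω) n) (-(1/2)) ⊗ₖ
            (1 : Matrix (Fin n → c) (Fin n → c) ℂ))).trace).re ∧
    ((tpowBip ω n *
        (mpow (tpow (ptraceR ω) n) (-(1/2)) ⊗ₖ (1 : Matrix (Fin n → c) (Fin n → c) ℂ)) *
        tpowBip ω n *
        (mpow (tpow (ptraceR ω) n) (-(1/2)) ⊗ₖ (1 : Matrix (Fin n → c) (Fin n → c) ℂ))).trace).re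
      = (2 : ℝ) ^ (-(n : ℝ) * H2cond ω) := by
  have hω0 : ω ≠ 0 := by
    rintro rfl
    simpa using hω.2
  refine ⟨?_, re_trace_collision_tpowBip hω.1 hω0 hS n⟩
  have hPpsd : P.PosSemidef := by
    simpa only [hP.eq, hP2] using posSemidef_conjTranspose_mul_self P
  have hQB := hPle.kronecker (PosSemidef.one (n := Fin n → c) (R := ℂ))
  rw [sub_kronecker, smul_kronecker] at hQB
  have hκ : (2 : ℝ) ^ (-(n : ℝ) * (vnEntropy (ptraceR ω) - δ)) =
      ((2 : ℝ) ^ (-(n : ℝ) * (vnEntropy (ptraceR ω) - δ) / 2)) ^ 2 := by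
    rw [← Real.rpow_natCast, ← Real.rpow_mul (by norm_num)]
    congr 1
    ring
  rw [hκ]
  exact re_trace_mul_mul_mul_le_smul (hω.1.tpowBip n) (hPpsd.kronecker .one) hQB

/-- Key trace bound in the simultaneous-decoder error analysis: if the projector `P` on `Sⁿ`
satisfies `P ≤ 2^{-n[H(S)-δ]/2}(ω_S^{⊗n})^{-1/2}`, then
`Tr{P ω^{⊗n} P ω^{⊗n}} ≤ 2^{-n[H(S)-δ]} Tr{ω^{⊗n}(ω_S^{⊗n})^{-1/2}ω^{⊗n}(ω_S^{⊗n})^{-1/2}}`,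
and the latter trace equals `2^{-n H₂(C|S)}`. -/
theorem collision_trace_bound {s c : Type*} [Fintype s] [Fintype c] [DecidableEq s]
    [DecidableEq c] (ω : Matrix (s × c) (s × c) ℂ) (hω : IsDensity ω)
    (hS : (ptraceR ω).PosDef) (n : ℕ) (δ : ℝ) (hδ : 0 < δ)
    (P : Matrix (Fin n → s) (Fin n → s) ℂ) (hP : P.IsHermitian) (hP2 : P * P = P)
    (hPle : ((((2 : ℝ) ^ (-(n : ℝ) * (vnEntropy (ptraceR ω) - δ) / 2) : ℝ) : ℂ) •
        mpow (tpow (ptraceR ω) n) (-(1/2)) - P).PosSemidef) :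
    (((P ⊗ₖ (1 : Matrix (Fin n → c) (Fin n → c) ℂ)) * tpowBip ω n *
        (P ⊗ₖ (1 : Matrix (Fin n → c) (Fin n → c) ℂ)) * tpowBip ω n).trace).re ≤
      (2 : ℝ) ^ (-(n : ℝ) * (vnEntropy (ptraceR ω) - δ)) *
        ((tpowBip ω n *
          (mpow (tpow (ptraceR ω) n) (-(1/2)) ⊗ₖ (1 : Matrix (Fin n → c) (Fin n → c) ℂ)) *
          tpowBip ω n *
          (mpow (tpow (ptraceR ω) n) (-(1/2)) ⊗ₖ
            (1 : Matrix (Fin n → c) (Fin n → c) ℂ))).trace).re ∧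
    ((tpowBip ω n *
        (mpow (tpow (ptraceR ω) n) (-(1/2)) ⊗ₖ (1 : Matrix (Fin n → c) (Fin n → c) ℂ)) *
        tpowBip ω n *
        (mpow (tpow (ptraceR ω) n) (-(1/2)) ⊗ₖ (1 : Matrix (Fin n → c) (Fin n → c) ℂ))).trace).re
      = (2 : ℝ) ^ (-(n : ℝ) * H2cond ω) :=
  collision_trace_bound_general ω hω hS n δ P hP hP2 hPle
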